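/- arXiv:math/0111120 — 3 statements merged into one kernel-verified Lean document; each statement's English description precedes it below -/
import Mathlib

section
/- For z ∈ (0,1) and all natural numbers n, the Chebyshev polynomial of the first kind satisfies T_n((1+z)/(1−z)) ≥ ½·((1+√z)/(1−√z))ⁿ. -/
/-!
Writing `a = (1 + √z) / (1 - √z)`, one has `(1 + z) / (1 - z) = (a + a⁻¹) / 2`, and
`T_n ((a + a⁻¹) / 2) = (aⁿ + a⁻ⁿ) / 2` (via the Dickson polynomial identity
`D_n (a + a⁻¹) = aⁿ + a⁻ⁿ`). Dropping the positive term `a⁻ⁿ / 2` gives the bound.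
-/

open Polynomial

theorem Polynomial.Chebyshev.T_eval_half_mul_add_of_mul_eq_one {R : Type*} [CommRing R]
    [Invertible (2 : R)] {x y : R} (h : x * y = 1) (n : ℕ) :
    (Chebyshev.T R n).eval (⅟2 * (x + y)) = ⅟2 * (x ^ n + y ^ n) := by
  rw [chebyshev_T_eq_dickson_one_one, eval_mul, eval_comp, eval_C, eval_mul, eval_X,
    eval_ofNat, mul_invOf_cancel_left, dickson_one_one_eval_add_inv x y h]

theorem Polynomial.Chebyshev.pow_div_two_le_T_eval {x : ℝ} (hx : 0 < x) (n : ℕ) :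
    x ^ n / 2 ≤ (Chebyshev.T ℝ n).eval ((x + x⁻¹) / 2) := by
  have h := T_eval_half_mul_add_of_mul_eq_one (mul_inv_cancel₀ hx.ne') n
  simp only [invOf_eq_inv] at h
  rw [div_eq_inv_mul, div_eq_inv_mul, h]
  have : 0 ≤ x⁻¹ ^ n := by positivity
  linarith

-- Also true at `s = ±1`, where both sides are `0` by the convention `x / 0 = 0`.
theorem add_inv_one_add_div_one_sub (s : ℝ) :
    ((1 + s) / (1 - s) + ((1 + s) / (1 - s))⁻¹) / 2 = (1 + s ^ 2) / (1 - s ^ 2) := by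
  rcases eq_or_ne (1 - s) 0 with h | h
  · obtain rfl : s = 1 := by linarith
    norm_num
  rcases eq_or_ne (1 + s) 0 with h' | h'
  · obtain rfl : s = -1 := by linarith
    norm_num
  have : 1 - s ^ 2 ≠ 0 := by
    rw [show 1 - s ^ 2 = (1 - s) * (1 + s) by ring]
    exact mul_ne_zero h h'
  field_simp
  ring

/-- For `z ∈ (0,1)`, `T_n((1+z)/(1−z)) ≥ ½·((1+√z)/(1−√z))ⁿ`. -/
theorem chebyshev_T_ge (n : ℕ) (z : ℝ) (hz : z ∈ Set.Ioo (0 : ℝ) 1) :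
    (1 / 2) * ((1 + Real.sqrt z) / (1 - Real.sqrt z)) ^ n ≤
      (Polynomial.Chebyshev.T ℝ n).eval ((1 + z) / (1 - z)) := by
  obtain ⟨hz0, hz1⟩ := hz
  have hsqrt_lt_one : Real.sqrt z < 1 := (Real.sqrt_lt' one_pos).mpr (by simpa using hz1)
  set a := (1 + Real.sqrt z) / (1 - Real.sqrt z)
  have ha : 0 < a := by
    have := Real.sqrt_nonneg z
    apply div_pos <;> linarith
  have hx : (1 + z) / (1 - z) = (a + a⁻¹) / 2 := by
    rw [add_inv_one_add_div_one_sub, Real.sq_sqrt hz0.le]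
  rw [hx, one_div_mul_eq_div]
  exact Chebyshev.pow_div_two_le_T_eval ha n
end

section
/- Fix z ∈ (0,1) and n ∈ ℕ, and let p_n be as defined via the Chebyshev polynomial (p_n(x) = (T_n(l(x))+1)/(T_n(l(0))+1) with l(x) = (−2/(1−z))x + (1+z)/(1−z)). Then for every x ∈ [z,1], p_n(x) ≤ 2/T_n((1+z)/(1−z)) ≤ 4·e^(−2n√z). -/
/-!
On `[z, 1]` the affine map `l` takes values in `[-1, 1]`, where `|T_n| ≤ 1`, so the numerator of
`p_n` is at most `2`. For the denominator write `(1 + z) / (1 - z) = (x + x⁻¹) / 2 = cosh (log x)`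
with `x = (1 + √z) / (1 - √z)`; then `T_n` there equals `cosh (n log x) ≥ xⁿ / 2`, and
`log x = log (1 + √z) - log (1 - √z) ≥ 2√z` because its power series has nonnegative terms.
-/

open Polynomial

/-- The affine map `l(x) = (−2/(1−z))x + (1+z)/(1−z)` as a polynomial. -/
noncomputable def lPoly (z : ℝ) : ℝ[X] := C (-2 / (1 - z)) * X + C ((1 + z) / (1 - z))

/-- The transformed Chebyshev polynomial
`p_n(x) = (T_n(l(x)) + 1)/(T_n(l(0)) + 1)`; note `l(0) = (1+z)/(1−z)`. -/
noncomputable def pPoly (n : ℕ) (z : ℝ) : ℝ[X] :=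
  C (((Polynomial.Chebyshev.T ℝ n).eval ((1 + z) / (1 - z)) + 1)⁻¹) *
    ((Polynomial.Chebyshev.T ℝ n).comp (lPoly z) + 1)

open Real Polynomial.Chebyshev

theorem Polynomial.Chebyshev.pow_div_two_le_eval_T_real (n : ℕ) {x : ℝ} (hx : 0 < x) :
    x ^ n / 2 ≤ (T ℝ n).eval ((x + x⁻¹) / 2) := by
  have hcosh : (T ℝ n).eval ((x + x⁻¹) / 2) = (x ^ n + (x ^ n)⁻¹) / 2 := by
    rw [← cosh_log hx, T_real_cosh, ← cosh_log (pow_pos hx n), log_pow, Int.cast_natCast]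
  rw [hcosh]
  have := inv_pos.2 (pow_pos hx n)
  linarith

theorem Real.two_mul_le_log_one_add_div_one_sub {s : ℝ} (hs0 : 0 ≤ s) (hs1 : s < 1) :
    2 * s ≤ log ((1 + s) / (1 - s)) := by
  have hsum := hasSum_log_sub_log_of_abs_lt_one (abs_lt.2 ⟨by linarith, hs1⟩)
  rw [← log_div (by linarith) (by linarith)] at hsum
  simpa using le_hasSum hsum 0 fun k _ ↦ by positivity

theorem Real.exp_two_mul_le_one_add_div_one_sub {s : ℝ} (hs0 : 0 ≤ s) (hs1 : s < 1) :
    exp (2 * s) ≤ (1 + s) / (1 - s) := by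
  rw [← exp_log (div_pos (by linarith) (by linarith) : 0 < (1 + s) / (1 - s))]
  exact exp_le_exp.2 (two_mul_le_log_one_add_div_one_sub hs0 hs1)

theorem Real.one_add_div_one_sub_add_inv_div_two {s : ℝ} (hs : |s| < 1) :
    ((1 + s) / (1 - s) + ((1 + s) / (1 - s))⁻¹) / 2 = (1 + s ^ 2) / (1 - s ^ 2) := by
  obtain ⟨h1, h2⟩ := abs_lt.1 hs
  have : 1 - s ^ 2 ≠ 0 := by nlinarith
  field_simp [show 1 - s ≠ 0 by linarith, show 1 + s ≠ 0 by linarith]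
  ring

theorem exp_div_two_le_eval_T_real (n : ℕ) {z : ℝ} (hz0 : 0 ≤ z) (hz1 : z < 1) :
    exp (2 * n * √z) / 2 ≤ (T ℝ n).eval ((1 + z) / (1 - z)) := by
  have hs0 : 0 ≤ √z := sqrt_nonneg z
  have hs1 : √z < 1 := by simpa using sqrt_lt_sqrt hz0 hz1
  have hz : (1 + z) / (1 - z) = ((1 + √z) / (1 - √z) + ((1 + √z) / (1 - √z))⁻¹) / 2 := by
    rw [one_add_div_one_sub_add_inv_div_two (by rwa [abs_of_nonneg hs0]), sq_sqrt hz0]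
  calc exp (2 * n * √z) / 2 = exp (2 * √z) ^ n / 2 := by rw [← exp_nat_mul]; ring_nf
    _ ≤ ((1 + √z) / (1 - √z)) ^ n / 2 := by
      gcongr; exact exp_two_mul_le_one_add_div_one_sub hs0 hs1
    _ ≤ (T ℝ n).eval ((1 + z) / (1 - z)) :=
      hz ▸ pow_div_two_le_eval_T_real n (div_pos (by linarith) (by linarith))

theorem eval_lPoly_mem_Icc {z x : ℝ} (hz : z < 1) (hx : x ∈ Set.Icc z 1) :
    (lPoly z).eval x ∈ Set.Icc (-1) 1 := by
  have h : 0 < 1 - z := by linarith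
  have heval : (lPoly z).eval x = (1 + z - 2 * x) / (1 - z) := by
    simp only [lPoly, eval_add, eval_mul, eval_C, eval_X]
    ring
  rw [heval, Set.mem_Icc, le_div_iff₀ h, div_le_one h]
  constructor <;> linarith [hx.1, hx.2]

theorem eval_pPoly (n : ℕ) (z x : ℝ) :
    (pPoly n z).eval x =
      ((T ℝ n).eval ((lPoly z).eval x) + 1) / ((T ℝ n).eval ((1 + z) / (1 - z)) + 1) := by
  simp only [pPoly, eval_mul, eval_C, eval_add, eval_comp, eval_one]
  ring

theorem eval_pPoly_le (n : ℕ) {z x : ℝ} (hz0 : 0 ≤ z) (hz1 : z < 1) (hx : x ∈ Set.Icc z 1) :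
    (pPoly n z).eval x ≤ 2 / (T ℝ n).eval ((1 + z) / (1 - z)) := by
  have hT : 1 ≤ (T ℝ n).eval ((1 + z) / (1 - z)) :=
    one_le_eval_T_real n ((one_le_div (by linarith)).2 (by linarith))
  have hnum : (T ℝ n).eval ((lPoly z).eval x) ≤ 1 :=
    (eval_T_real_mem_Icc n (eval_lPoly_mem_Icc hz1 hx)).2
  calc (pPoly n z).eval x ≤ 2 / ((T ℝ n).eval ((1 + z) / (1 - z)) + 1) := by
        rw [eval_pPoly]; gcongr; linarith
    _ ≤ 2 / (T ℝ n).eval ((1 + z) / (1 - z)) := by gcongr; linarith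

theorem two_div_eval_T_real_le (n : ℕ) {z : ℝ} (hz0 : 0 ≤ z) (hz1 : z < 1) :
    2 / (T ℝ n).eval ((1 + z) / (1 - z)) ≤ 4 * exp (-2 * n * √z) := by
  have h := exp_div_two_le_eval_T_real n hz0 hz1
  have hpos : 0 < exp (2 * n * √z) / 2 := by positivity
  calc 2 / (T ℝ n).eval ((1 + z) / (1 - z)) ≤ 2 / (exp (2 * n * √z) / 2) := by gcongr
    _ = 4 * exp (-2 * n * √z) := by rw [neg_mul, neg_mul, exp_neg]; field_simp; norm_num

theorem pPoly_le_on_Icc (n : ℕ) (z : ℝ) (hz : z ∈ Set.Ioo (0 : ℝ) 1) :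
    (∀ x ∈ Set.Icc z 1,
      (pPoly n z).eval x ≤ 2 / (Polynomial.Chebyshev.T ℝ n).eval ((1 + z) / (1 - z))) ∧
    2 / (Polynomial.Chebyshev.T ℝ n).eval ((1 + z) / (1 - z)) ≤
      4 * Real.exp (-2 * n * Real.sqrt z) :=
  ⟨fun _ hx ↦ eval_pPoly_le n hz.1.le hz.2 hx, two_div_eval_T_real_le n hz.1.le hz.2⟩
end

section
/- Let μ be a probability measure on [0,1] and define J(n,μ) = inf over polynomials p of degree ≤ n with p(0)=1 and p ≥ 0 on [0,1] of ∫₀¹ p dμ. Then for every n ∈ ℕ and z ∈ (0,1): J(n,μ) ≤ μ([0,z]) + 4e^(−2n√z). -/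
/-! With `y(x) = (1 + z - 2x) / (1 - z)`, take `p(x) = (T_n(y(x)) + 1) / (T_n(y(0)) + 1)`.
On `[z, 1]` we have `y ∈ [-1, 1]`, so `0 ≤ p ≤ 2 / (T_n(y(0)) + 1)`; on `[0, z]` we have
`y ∈ [1, y(0)]`, where `T_n` is increasing, so `0 ≤ p ≤ 1`. Finally, with `u = √z`,
`y(0) = cosh s` for `e^s = (1 + u) / (1 - u) ≥ e^{2u}`, so `T_n(y(0)) = cosh (n s) ≥ e^{2nu} / 2`. -/

open MeasureTheory

/-- `J(n,μ)` : infimum of `∫₀¹ p dμ` over polynomials `p` of degree at most `n`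
with `p(0) = 1` and `p ≥ 0` on `[0,1]`. -/
noncomputable def J (n : ℕ) (μ : Measure ℝ) : ℝ :=
  sInf {r : ℝ | ∃ p : Polynomial ℝ, p.natDegree ≤ n ∧ p.eval 0 = 1 ∧
    (∀ x ∈ Set.Icc (0 : ℝ) 1, 0 ≤ p.eval x) ∧
    r = ∫ x in Set.Icc (0 : ℝ) 1, p.eval x ∂μ}

open Polynomial Polynomial.Chebyshev Real Set

theorem Real.two_mul_le_log_one_add_sub_log_one_sub {u : ℝ} (hu0 : 0 ≤ u) (hu1 : u < 1) :
    2 * u ≤ log (1 + u) - log (1 - u) := by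
  have h := hasSum_log_sub_log_of_abs_lt_one (abs_lt.2 ⟨by linarith, hu1⟩)
  simpa using le_hasSum h 0 fun k _ => by positivity

namespace Polynomial.Chebyshev

theorem neg_one_le_eval_T_real (n : ℤ) {x : ℝ} (hx : -1 ≤ x) : -1 ≤ (T ℝ n).eval x := by
  rcases le_total x 1 with hx1 | hx1
  · exact (eval_T_real_mem_Icc n ⟨hx, hx1⟩).1
  · linarith [one_le_eval_T_real n hx1]

theorem monotoneOn_eval_T_real (n : ℤ) : MonotoneOn (fun x => (T ℝ n).eval x) (Ici 1) := by
  intro x (hx : 1 ≤ x) y (hy : 1 ≤ y) hxy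
  simp only
  rw [← cosh_arcosh hx, ← cosh_arcosh hy, T_real_cosh, T_real_cosh, cosh_le_cosh, abs_mul,
    abs_mul, abs_of_nonneg (arcosh_nonneg hx), abs_of_nonneg (arcosh_nonneg hy)]
  gcongr
  exact (arcosh_le_arcosh (by linarith) (by linarith)).2 hxy

theorem exp_le_two_mul_eval_T_real (n : ℕ) {u : ℝ} (hu0 : 0 ≤ u) (hu1 : u < 1) :
    exp (2 * n * u) ≤ 2 * (T ℝ n).eval ((1 + u ^ 2) / (1 - u ^ 2)) := by
  have hu1' : 0 < 1 - u := by linarith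
  have hs : 2 * u ≤ log ((1 + u) / (1 - u)) := by
    rw [log_div (by linarith) hu1'.ne']
    exact two_mul_le_log_one_add_sub_log_one_sub hu0 hu1
  have hcosh : cosh (log ((1 + u) / (1 - u))) = (1 + u ^ 2) / (1 - u ^ 2) := by
    have : 1 - u ^ 2 ≠ 0 := by nlinarith
    rw [cosh_log (by positivity)]
    field_simp
    ring
  set s := log ((1 + u) / (1 - u))
  rw [← hcosh, T_real_cosh, cosh_eq]
  calc exp (2 * n * u) ≤ exp (n * s) := exp_le_exp.2 (by nlinarith)
    _ ≤ exp (n * s) + exp (-(n * s)) := le_add_of_nonneg_right (exp_pos _).le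
    _ = _ := by push_cast; ring

end Polynomial.Chebyshev

noncomputable def transformedChebyshev (n : ℕ) (z : ℝ) : ℝ[X] :=
  C ((T ℝ n).eval ((1 + z) / (1 - z)) + 1)⁻¹ *
    ((T ℝ n).comp (C (1 - z)⁻¹ * (C (1 + z) - 2 * X)) + 1)

section transformedChebyshev

variable {z x : ℝ}

theorem natDegree_transformedChebyshev_le (n : ℕ) (z : ℝ) :
    (transformedChebyshev n z).natDegree ≤ n := by
  have hlin : (C (1 - z)⁻¹ * (C (1 + z) - 2 * X)).natDegree ≤ 1 := by
    refine (natDegree_C_mul_le _ _).trans ?_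
    compute_degree
  unfold transformedChebyshev
  refine (natDegree_C_mul_le _ _).trans <| (natDegree_add_le _ _).trans <| max_le ?_ (by simp)
  refine natDegree_comp_le.trans ?_
  simpa [natDegree_T] using Nat.mul_le_mul_left _ hlin

theorem eval_transformedChebyshev (n : ℕ) (z x : ℝ) :
    (transformedChebyshev n z).eval x =
      ((T ℝ n).eval ((1 + z - 2 * x) / (1 - z)) + 1) / ((T ℝ n).eval ((1 + z) / (1 - z)) + 1) := by
  simp only [transformedChebyshev, eval_mul, eval_C, eval_add, eval_comp, eval_sub, eval_X,
    eval_one, eval_ofNat, inv_mul_eq_div]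

theorem one_le_eval_T_real_one_add_div_one_sub (n : ℕ) (hz0 : 0 ≤ z) (hz1 : z < 1) :
    1 ≤ (T ℝ n).eval ((1 + z) / (1 - z)) :=
  one_le_eval_T_real n <| (one_le_div (by linarith)).2 (by linarith)

theorem eval_transformedChebyshev_zero (n : ℕ) (hz0 : 0 ≤ z) (hz1 : z < 1) :
    (transformedChebyshev n z).eval 0 = 1 := by
  have := one_le_eval_T_real_one_add_div_one_sub n hz0 hz1
  rw [eval_transformedChebyshev, mul_zero, sub_zero, div_self (by linarith)]

theorem eval_transformedChebyshev_nonneg (n : ℕ) (hz0 : 0 ≤ z) (hz1 : z < 1) (hx : x ≤ 1) :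
    0 ≤ (transformedChebyshev n z).eval x := by
  have hy := neg_one_le_eval_T_real n (x := (1 + z - 2 * x) / (1 - z))
    ((le_div_iff₀ (by linarith)).2 (by linarith))
  have := one_le_eval_T_real_one_add_div_one_sub n hz0 hz1
  rw [eval_transformedChebyshev]
  exact div_nonneg (by linarith) (by linarith)

theorem eval_transformedChebyshev_le_one (n : ℕ) (hz1 : z < 1) (hx : x ∈ Icc 0 z) :
    (transformedChebyshev n z).eval x ≤ 1 := by
  have hz1' : 0 < 1 - z := by linarith
  have hy1 : 1 ≤ (1 + z - 2 * x) / (1 - z) := (one_le_div hz1').2 (by linarith [hx.2])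
  have hyt : (1 + z - 2 * x) / (1 - z) ≤ (1 + z) / (1 - z) := by gcongr; linarith [hx.1]
  have hT := monotoneOn_eval_T_real n hy1 (hy1.trans hyt) hyt
  have := one_le_eval_T_real n (hy1.trans hyt)
  rw [eval_transformedChebyshev, div_le_one (by linarith)]
  linarith

theorem eval_transformedChebyshev_le_exp (n : ℕ) (hz0 : 0 ≤ z) (hz1 : z < 1)
    (hx : x ∈ Icc z 1) :
    (transformedChebyshev n z).eval x ≤ 4 * exp (-2 * n * √z) := by
  have hz1' : 0 < 1 - z := by linarith
  have hy : (1 + z - 2 * x) / (1 - z) ∈ Icc (-1) 1 :=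
    ⟨(le_div_iff₀ hz1').2 (by linarith [hx.2]), (div_le_one hz1').2 (by linarith [hx.1])⟩
  have hTy := (eval_T_real_mem_Icc n hy).2
  have hTt := exp_le_two_mul_eval_T_real n (sqrt_nonneg z) ((sqrt_lt' one_pos).2 (by simpa))
  rw [sq_sqrt hz0] at hTt
  calc (transformedChebyshev n z).eval x
      = ((T ℝ n).eval ((1 + z - 2 * x) / (1 - z)) + 1) / ((T ℝ n).eval ((1 + z) / (1 - z)) + 1) :=
        eval_transformedChebyshev n z x
    _ ≤ 2 / (exp (2 * n * √z) / 2) :=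
        div_le_div₀ zero_le_two (by linarith) (by positivity) (by linarith)
    _ = 4 * exp (-2 * n * √z) := by rw [neg_mul, neg_mul, exp_neg]; field_simp; norm_num

end transformedChebyshev

theorem J_le_setIntegral {n : ℕ} {μ : Measure ℝ} {p : ℝ[X]} (hdeg : p.natDegree ≤ n)
    (hp0 : p.eval 0 = 1) (hp : ∀ x ∈ Icc (0 : ℝ) 1, 0 ≤ p.eval x) :
    J n μ ≤ ∫ x in Icc (0 : ℝ) 1, p.eval x ∂μ :=
  csInf_le ⟨0, by rintro r ⟨q, -, -, hq, rfl⟩; exact setIntegral_nonneg measurableSet_Icc hq⟩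
    ⟨p, hdeg, hp0, hp, rfl⟩

theorem setIntegral_union_le_measureReal_add {α : Type*} [MeasurableSpace α] {μ : Measure α}
    [IsProbabilityMeasure μ] {s t : Set α} {f : α → ℝ} {M : ℝ} (hst : Disjoint s t)
    (hs : MeasurableSet s) (ht : MeasurableSet t) (hfs : IntegrableOn f s μ)
    (hft : IntegrableOn f t μ) (hf1 : ∀ x ∈ s, f x ≤ 1) (hfM : ∀ x ∈ t, f x ≤ M) (hM : 0 ≤ M) :
    ∫ x in s ∪ t, f x ∂μ ≤ μ.real s + M := by
  rw [setIntegral_union hst ht hfs hft]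
  have h1 : ∫ x in s, f x ∂μ ≤ μ.real s := by
    simpa using setIntegral_mono_on hfs (integrableOn_const (measure_ne_top μ s)) hs hf1
  have h2 : ∫ x in t, f x ∂μ ≤ μ.real t * M := by
    simpa using setIntegral_mono_on hft (integrableOn_const (measure_ne_top μ t)) ht hfM
  have := mul_le_of_le_one_left hM (measureReal_le_one (μ := μ) (s := t))
  linarith

theorem J_le_mu_add_exp_general (μ : Measure ℝ) [IsProbabilityMeasure μ]
    (n : ℕ) (z : ℝ) (hz : z ∈ Set.Ioo (0 : ℝ) 1) :
    J n μ ≤ (μ (Set.Icc 0 z)).toReal + 4 * Real.exp (-2 * n * Real.sqrt z) := by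
  obtain ⟨hz0, hz1⟩ := hz
  set p := transformedChebyshev n z
  have hp : Continuous fun x => p.eval x := p.continuous
  calc J n μ ≤ ∫ x in Icc 0 1, p.eval x ∂μ :=
        J_le_setIntegral (natDegree_transformedChebyshev_le n z)
          (eval_transformedChebyshev_zero n hz0.le hz1)
          fun x hx => eval_transformedChebyshev_nonneg n hz0.le hz1 hx.2
    _ = ∫ x in Icc 0 z ∪ Ioc z 1, p.eval x ∂μ := by rw [Icc_union_Ioc_eq_Icc hz0.le hz1.le]
    _ ≤ _ := setIntegral_union_le_measureReal_add
        (Set.disjoint_left.2 fun x hx hx' => hx'.1.not_ge hx.2) measurableSet_Icc measurableSet_Ioc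
        hp.integrableOn_Icc hp.integrableOn_Ioc
        (fun x hx => eval_transformedChebyshev_le_one n hz1 hx)
        (fun x hx => eval_transformedChebyshev_le_exp n hz0.le hz1 (Ioc_subset_Icc_self hx))
        (by positivity)

theorem J_le_mu_add_exp (μ : Measure ℝ) [IsProbabilityMeasure μ]
    (hμ : μ (Set.Icc (0 : ℝ) 1)ᶜ = 0)
    (n : ℕ) (z : ℝ) (hz : z ∈ Set.Ioo (0 : ℝ) 1) :
    J n μ ≤ (μ (Set.Icc 0 z)).toReal + 4 * Real.exp (-2 * n * Real.sqrt z) :=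
  J_le_mu_add_exp_general μ n z hz
end
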